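/- arXiv:1510.08643 — 2 statements merged into one kernel-verified Lean document; each statement's English description precedes it below -/
import Mathlib

section
/- The operator A₄ = pt∂_x + (x/t)∂_p + 2xp commutes with the pseudo-diffusion operator L = ∂_t - (1/4)∂_xx + (1/(4t²))∂_pp on smooth functions, i.e. [L, A₄] = 0. -/
noncomputable def pdT (Q : ℝ → ℝ → ℝ → ℝ) (x p t : ℝ) : ℝ := deriv (fun s => Q x p s) t
noncomputable def pdX (Q : ℝ → ℝ → ℝ → ℝ) (x p t : ℝ) : ℝ := deriv (fun z => Q z p t) x
noncomputable def pdP (Q : ℝ → ℝ → ℝ → ℝ) (x p t : ℝ) : ℝ := deriv (fun z => Q x z t) p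
noncomputable def pdXX (Q : ℝ → ℝ → ℝ → ℝ) (x p t : ℝ) : ℝ :=
  deriv (fun y => deriv (fun z => Q z p t) y) x
noncomputable def pdPP (Q : ℝ → ℝ → ℝ → ℝ) (x p t : ℝ) : ℝ :=
  deriv (fun y => deriv (fun z => Q x z t) y) p

/-- The pseudo-diffusion operator `L = ∂_t - (1/4)∂_xx + (1/(4t²))∂_pp`. -/
noncomputable def Lop (Q : ℝ → ℝ → ℝ → ℝ) (x p t : ℝ) : ℝ :=
  pdT Q x p t - (1/4) * pdXX Q x p t + 1/(4*t^2) * pdPP Q x p t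

/-- Smoothness on the region `t > 0`. -/
def SmoothPos (Q : ℝ → ℝ → ℝ → ℝ) : Prop :=
  ContDiffOn ℝ (⊤ : ℕ∞) (fun v : ℝ × ℝ × ℝ => Q v.1 v.2.1 v.2.2) {v : ℝ × ℝ × ℝ | 0 < v.2.2}

/-- The operator `A₄ = pt∂_x + (x/t)∂_p + 2xp`. -/
noncomputable def A4op (Q : ℝ → ℝ → ℝ → ℝ) : ℝ → ℝ → ℝ → ℝ :=
  fun x p t => p*t * pdX Q x p t + (x/t) * pdP Q x p t + 2*x*p*Q x p t

/- ### Auxiliary machinery -/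

open Filter

noncomputable def DD (a : ℝ×ℝ×ℝ) (f : ℝ×ℝ×ℝ → ℝ) (v : ℝ×ℝ×ℝ) : ℝ := fderiv ℝ f v a

def ee1 : ℝ×ℝ×ℝ := (1,0,0)
def ee2 : ℝ×ℝ×ℝ := (0,1,0)
def ee3 : ℝ×ℝ×ℝ := (0,0,1)

def Upos : Set (ℝ×ℝ×ℝ) := {v : ℝ×ℝ×ℝ | 0 < v.2.2}

lemma isOpen_Upos : IsOpen Upos :=
  isOpen_lt continuous_const (continuous_snd.comp continuous_snd)

lemma memU {x p t : ℝ} (ht : 0 < t) : ((x,p,t) : ℝ×ℝ×ℝ) ∈ Upos := ht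

noncomputable def FF (Q : ℝ → ℝ → ℝ → ℝ) : ℝ×ℝ×ℝ → ℝ := fun v => Q v.1 v.2.1 v.2.2

lemma smoothFF {Q : ℝ → ℝ → ℝ → ℝ} (hQ : SmoothPos Q) : ContDiffOn ℝ (⊤ : ℕ∞) (FF Q) Upos := hQ

lemma diffAtU {F : Type*} [NormedAddCommGroup F] [NormedSpace ℝ F] {f : ℝ×ℝ×ℝ → F}
    (hf : ContDiffOn ℝ (⊤ : ℕ∞) f Upos) {v : ℝ×ℝ×ℝ} (hv : v ∈ Upos) :
    DifferentiableAt ℝ f v :=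
  (hf.differentiableOn (by simp)).differentiableAt (isOpen_Upos.mem_nhds hv)

lemma DD_smooth (a : ℝ×ℝ×ℝ) {f : ℝ×ℝ×ℝ → ℝ} (hf : ContDiffOn ℝ (⊤ : ℕ∞) f Upos) :
    ContDiffOn ℝ (⊤ : ℕ∞) (DD a f) Upos :=
  (hf.fderiv_of_isOpen isOpen_Upos (by simp)).clm_apply contDiffOn_const

lemma sliceX {f : ℝ×ℝ×ℝ → ℝ} {x p t : ℝ} (hf : DifferentiableAt ℝ f (x,p,t)) :
    HasDerivAt (fun z => f (z,p,t)) (DD ee1 f (x,p,t)) x := by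
  have h : HasDerivAt (fun z : ℝ => ((z,p,t) : ℝ×ℝ×ℝ)) ee1 x :=
    (hasDerivAt_id x).prodMk ((hasDerivAt_const x p).prodMk (hasDerivAt_const x t))
  exact hf.hasFDerivAt.comp_hasDerivAt x h

lemma sliceP {f : ℝ×ℝ×ℝ → ℝ} {x p t : ℝ} (hf : DifferentiableAt ℝ f (x,p,t)) :
    HasDerivAt (fun z => f (x,z,t)) (DD ee2 f (x,p,t)) p := by
  have h : HasDerivAt (fun z : ℝ => ((x,z,t) : ℝ×ℝ×ℝ)) ee2 p :=
    (hasDerivAt_const p x).prodMk ((hasDerivAt_id p).prodMk (hasDerivAt_const p t))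
  exact hf.hasFDerivAt.comp_hasDerivAt p h

lemma sliceT {f : ℝ×ℝ×ℝ → ℝ} {x p t : ℝ} (hf : DifferentiableAt ℝ f (x,p,t)) :
    HasDerivAt (fun s => f (x,p,s)) (DD ee3 f (x,p,t)) t := by
  have h : HasDerivAt (fun s : ℝ => ((x,p,s) : ℝ×ℝ×ℝ)) ee3 t :=
    (hasDerivAt_const t x).prodMk ((hasDerivAt_const t p).prodMk (hasDerivAt_id t))
  exact hf.hasFDerivAt.comp_hasDerivAt t h

lemma DD_comm (a b : ℝ×ℝ×ℝ) {f : ℝ×ℝ×ℝ → ℝ} (hf : ContDiffOn ℝ (⊤ : ℕ∞) f Upos)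
    {v : ℝ×ℝ×ℝ} (hv : v ∈ Upos) : DD a (DD b f) v = DD b (DD a f) v := by
  have hsym : IsSymmSndFDerivAt ℝ f v :=
    (hf.contDiffAt (isOpen_Upos.mem_nhds hv)).isSymmSndFDerivAt (by rw [minSmoothness_of_isRCLikeNormedField]; exact WithTop.coe_le_coe.2 le_top)
  have hdf : DifferentiableAt ℝ (fderiv ℝ f) v :=
    diffAtU (hf.fderiv_of_isOpen isOpen_Upos (by simp)) hv
  have key : ∀ c d : ℝ×ℝ×ℝ, DD c (DD d f) v = fderiv ℝ (fderiv ℝ f) v c d := by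
    intro c d
    have h1 : DD c (DD d f) v = fderiv ℝ (fun y => (fderiv ℝ f y) d) v c := rfl
    rw [h1, fderiv_clm_apply hdf (differentiableAt_const d)]
    simp
  rw [key a b, key b a]
  exact hsym a b

lemma DD_congr {g h : ℝ×ℝ×ℝ → ℝ} (a : ℝ×ℝ×ℝ) {v : ℝ×ℝ×ℝ} (he : g =ᶠ[nhds v] h) :
    DD a g v = DD a h v := by
  unfold DD; rw [he.fderiv_eq]

lemma pdX_eq {Q : ℝ → ℝ → ℝ → ℝ} (hQ : SmoothPos Q) {x p t : ℝ} (ht : 0 < t) :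
    pdX Q x p t = DD ee1 (FF Q) (x,p,t) :=
  (sliceX (diffAtU (smoothFF hQ) (memU ht))).deriv

lemma pdP_eq {Q : ℝ → ℝ → ℝ → ℝ} (hQ : SmoothPos Q) {x p t : ℝ} (ht : 0 < t) :
    pdP Q x p t = DD ee2 (FF Q) (x,p,t) :=
  (sliceP (diffAtU (smoothFF hQ) (memU ht))).deriv

lemma pdT_eq {Q : ℝ → ℝ → ℝ → ℝ} (hQ : SmoothPos Q) {x p t : ℝ} (ht : 0 < t) :
    pdT Q x p t = DD ee3 (FF Q) (x,p,t) :=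
  (sliceT (diffAtU (smoothFF hQ) (memU ht))).deriv

lemma pdXX_eq {Q : ℝ → ℝ → ℝ → ℝ} (hQ : SmoothPos Q) {x p t : ℝ} (ht : 0 < t) :
    pdXX Q x p t = DD ee1 (DD ee1 (FF Q)) (x,p,t) := by
  have h1 : (fun y => deriv (fun z => Q z p t) y) = fun y => DD ee1 (FF Q) (y,p,t) :=
    funext fun y => pdX_eq hQ ht
  have h0 : pdXX Q x p t = deriv (fun y => deriv (fun z => Q z p t) y) x := rfl
  rw [h0, h1]
  exact (sliceX (diffAtU (DD_smooth ee1 (smoothFF hQ)) (memU ht))).deriv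

lemma pdPP_eq {Q : ℝ → ℝ → ℝ → ℝ} (hQ : SmoothPos Q) {x p t : ℝ} (ht : 0 < t) :
    pdPP Q x p t = DD ee2 (DD ee2 (FF Q)) (x,p,t) := by
  have h1 : (fun y => deriv (fun z => Q x z t) y) = fun y => DD ee2 (FF Q) (x,y,t) :=
    funext fun y => pdP_eq hQ ht
  have h0 : pdPP Q x p t = deriv (fun y => deriv (fun z => Q x z t) y) p := rfl
  rw [h0, h1]
  exact (sliceP (diffAtU (DD_smooth ee2 (smoothFF hQ)) (memU ht))).deriv

lemma A4_eq {Q : ℝ → ℝ → ℝ → ℝ} (hQ : SmoothPos Q) {x p t : ℝ} (ht : 0 < t) :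
    A4op Q x p t = p*t * DD ee1 (FF Q) (x,p,t) + (x/t) * DD ee2 (FF Q) (x,p,t)
      + 2*x*p * FF Q (x,p,t) := by
  unfold A4op
  rw [pdX_eq hQ ht, pdP_eq hQ ht]
  rfl

lemma Lop_eq {Q : ℝ → ℝ → ℝ → ℝ} (hQ : SmoothPos Q) {x p t : ℝ} (ht : 0 < t) :
    Lop Q x p t = DD ee3 (FF Q) (x,p,t) - (1/4) * DD ee1 (DD ee1 (FF Q)) (x,p,t)
      + 1/(4*t^2) * DD ee2 (DD ee2 (FF Q)) (x,p,t) := by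
  unfold Lop
  rw [pdT_eq hQ ht, pdXX_eq hQ ht, pdPP_eq hQ ht]

/-- `[L, A₄] = 0` on smooth functions. -/
theorem stmt6 (Q : ℝ → ℝ → ℝ → ℝ) (hQ : SmoothPos Q) :
    ∀ x p t : ℝ, 0 < t →
      Lop (A4op Q) x p t = A4op (fun a b c => Lop Q a b c) x p t := by
  intro x p t ht
  have ht' : t ≠ 0 := ne_of_gt ht
  have hv : ((x,p,t) : ℝ×ℝ×ℝ) ∈ Upos := memU ht
  have hG : ContDiffOn ℝ (⊤ : ℕ∞) (FF Q) Upos := smoothFF hQ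
  have hG1 := DD_smooth ee1 hG
  have hG2 := DD_smooth ee2 hG
  have hG3 := DD_smooth ee3 hG
  have hG11 := DD_smooth ee1 hG1
  have hG12 := DD_smooth ee1 hG2
  have hG21 := DD_smooth ee2 hG1
  have hG22 := DD_smooth ee2 hG2
  have sX : ∀ (f : ℝ×ℝ×ℝ → ℝ), ContDiffOn ℝ (⊤ : ℕ∞) f Upos → ∀ y : ℝ,
      HasDerivAt (fun z => f (z,p,t)) (DD ee1 f (y,p,t)) y :=
    fun f hf y => sliceX (diffAtU hf (memU ht))
  have sP : ∀ (f : ℝ×ℝ×ℝ → ℝ), ContDiffOn ℝ (⊤ : ℕ∞) f Upos → ∀ y : ℝ,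
      HasDerivAt (fun z => f (x,z,t)) (DD ee2 f (x,y,t)) y :=
    fun f hf y => sliceP (diffAtU hf (memU ht))
  have sT : ∀ (f : ℝ×ℝ×ℝ → ℝ), ContDiffOn ℝ (⊤ : ℕ∞) f Upos →
      HasDerivAt (fun s => f (x,p,s)) (DD ee3 f (x,p,t)) t :=
    fun f hf => sliceT (diffAtU hf (memU ht))
  -- ∂_t of A₄Q
  have hA4t : pdT (A4op Q) x p t =
      p * DD ee1 (FF Q) (x,p,t) + p*t * DD ee3 (DD ee1 (FF Q)) (x,p,t)
      - x/t^2 * DD ee2 (FF Q) (x,p,t) + x/t * DD ee3 (DD ee2 (FF Q)) (x,p,t)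
      + 2*x*p * DD ee3 (FF Q) (x,p,t) := by
    have hev : (fun s => A4op Q x p s) =ᶠ[nhds t]
        (fun s => p*s * DD ee1 (FF Q) (x,p,s) + x*s⁻¹ * DD ee2 (FF Q) (x,p,s)
          + 2*x*p * FF Q (x,p,s)) := by
      filter_upwards [Ioi_mem_nhds ht] with s hs
      rw [A4_eq hQ hs]; ring
    have h0 : pdT (A4op Q) x p t = deriv (fun s => A4op Q x p s) t := rfl
    rw [h0, hev.deriv_eq]
    have comb := ((((hasDerivAt_id t).const_mul p).mul (sT (DD ee1 (FF Q)) hG1)).add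
        (((hasDerivAt_inv ht').const_mul x).mul (sT (DD ee2 (FF Q)) hG2))).add
        ((sT (FF Q) hG).const_mul (2*x*p))
    refine comb.deriv.trans ?_
    simp only [id_eq]
    field_simp
    ring
  -- ∂_xx of A₄Q
  have hinner : (fun y => deriv (fun z => A4op Q z p t) y) =
      fun y => p*t * DD ee1 (DD ee1 (FF Q)) (y,p,t)
        + (t⁻¹ * DD ee2 (FF Q) (y,p,t) + y*t⁻¹ * DD ee1 (DD ee2 (FF Q)) (y,p,t))
        + (2*p * FF Q (y,p,t) + 2*y*p * DD ee1 (FF Q) (y,p,t)) := by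
    funext y
    have hfun : (fun z : ℝ => A4op Q z p t)
        = fun z => p*t * DD ee1 (FF Q) (z,p,t) + z*t⁻¹ * DD ee2 (FF Q) (z,p,t)
          + 2*z*p * FF Q (z,p,t) :=
      funext fun z => by rw [A4_eq hQ ht]; ring
    rw [hfun]
    have comb := ((((sX (DD ee1 (FF Q)) hG1 y).const_mul (p*t)).add
      (((hasDerivAt_id y).mul_const t⁻¹).mul (sX (DD ee2 (FF Q)) hG2 y))).add
      ((((hasDerivAt_id y).const_mul 2).mul_const p).mul (sX (FF Q) hG y)))
    refine comb.deriv.trans ?_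
    simp only [id_eq]
    ring
  have hA4xx : pdXX (A4op Q) x p t =
      p*t * DD ee1 (DD ee1 (DD ee1 (FF Q))) (x,p,t)
      + 2*t⁻¹ * DD ee1 (DD ee2 (FF Q)) (x,p,t)
      + x*t⁻¹ * DD ee1 (DD ee1 (DD ee2 (FF Q))) (x,p,t)
      + 4*p * DD ee1 (FF Q) (x,p,t)
      + 2*x*p * DD ee1 (DD ee1 (FF Q)) (x,p,t) := by
    have h0 : pdXX (A4op Q) x p t = deriv (fun y => deriv (fun z => A4op Q z p t) y) x := rfl
    rw [h0, hinner]
    have comb := ((((sX (DD ee1 (DD ee1 (FF Q))) hG11 x).const_mul (p*t)).add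
      (((sX (DD ee2 (FF Q)) hG2 x).const_mul t⁻¹).add
       (((hasDerivAt_id x).mul_const t⁻¹).mul (sX (DD ee1 (DD ee2 (FF Q))) hG12 x)))).add
      (((sX (FF Q) hG x).const_mul (2*p)).add
       ((((hasDerivAt_id x).const_mul 2).mul_const p).mul (sX (DD ee1 (FF Q)) hG1 x))))
    refine comb.deriv.trans ?_
    simp only [id_eq]
    ring
  -- ∂_pp of A₄Q
  have hinnerP : (fun y => deriv (fun z => A4op Q x z t) y) =
      fun y => t * DD ee1 (FF Q) (x,y,t) + y*t * DD ee2 (DD ee1 (FF Q)) (x,y,t)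
        + x*t⁻¹ * DD ee2 (DD ee2 (FF Q)) (x,y,t)
        + 2*x * FF Q (x,y,t) + 2*x*y * DD ee2 (FF Q) (x,y,t) := by
    funext y
    have hfun : (fun z : ℝ => A4op Q x z t)
        = fun z => z*t * DD ee1 (FF Q) (x,z,t) + x*t⁻¹ * DD ee2 (FF Q) (x,z,t)
          + 2*x*z * FF Q (x,z,t) :=
      funext fun z => by rw [A4_eq hQ ht]; ring
    rw [hfun]
    have comb := (((((hasDerivAt_id y).mul_const t).mul (sP (DD ee1 (FF Q)) hG1 y)).add
      ((sP (DD ee2 (FF Q)) hG2 y).const_mul (x*t⁻¹))).add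
      (((hasDerivAt_id y).const_mul (2*x)).mul (sP (FF Q) hG y)))
    refine comb.deriv.trans ?_
    simp only [id_eq]
    ring
  have hA4pp : pdPP (A4op Q) x p t =
      2*t * DD ee2 (DD ee1 (FF Q)) (x,p,t)
      + p*t * DD ee2 (DD ee2 (DD ee1 (FF Q))) (x,p,t)
      + x*t⁻¹ * DD ee2 (DD ee2 (DD ee2 (FF Q))) (x,p,t)
      + 4*x * DD ee2 (FF Q) (x,p,t)
      + 2*x*p * DD ee2 (DD ee2 (FF Q)) (x,p,t) := by
    have h0 : pdPP (A4op Q) x p t = deriv (fun y => deriv (fun z => A4op Q x z t) y) p := rfl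
    rw [h0, hinnerP]
    have comb := (((((sP (DD ee1 (FF Q)) hG1 p).const_mul t).add
      (((hasDerivAt_id p).mul_const t).mul (sP (DD ee2 (DD ee1 (FF Q))) hG21 p))).add
      ((sP (DD ee2 (DD ee2 (FF Q))) hG22 p).const_mul (x*t⁻¹))).add
      ((sP (FF Q) hG p).const_mul (2*x))).add
      (((hasDerivAt_id p).const_mul (2*x)).mul (sP (DD ee2 (FF Q)) hG2 p))
    refine comb.deriv.trans ?_
    simp only [id_eq]
    ring
  -- ∂_x and ∂_p of LQ
  have hLx : pdX (fun a b c => Lop Q a b c) x p t =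
      DD ee1 (DD ee3 (FF Q)) (x,p,t) - 1/4 * DD ee1 (DD ee1 (DD ee1 (FF Q))) (x,p,t)
      + 1/(4*t^2) * DD ee1 (DD ee2 (DD ee2 (FF Q))) (x,p,t) := by
    have h0 : pdX (fun a b c => Lop Q a b c) x p t = deriv (fun z => Lop Q z p t) x := rfl
    have hfun : (fun z : ℝ => Lop Q z p t)
        = fun z => DD ee3 (FF Q) (z,p,t) - (1/4) * DD ee1 (DD ee1 (FF Q)) (z,p,t)
          + 1/(4*t^2) * DD ee2 (DD ee2 (FF Q)) (z,p,t) :=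
      funext fun z => Lop_eq hQ ht
    rw [h0, hfun]
    have comb := (((sX (DD ee3 (FF Q)) hG3 x).sub
      ((sX (DD ee1 (DD ee1 (FF Q))) hG11 x).const_mul (1/4))).add
      ((sX (DD ee2 (DD ee2 (FF Q))) hG22 x).const_mul (1/(4*t^2))))
    exact comb.deriv
  have hLp : pdP (fun a b c => Lop Q a b c) x p t =
      DD ee2 (DD ee3 (FF Q)) (x,p,t) - 1/4 * DD ee2 (DD ee1 (DD ee1 (FF Q))) (x,p,t)
      + 1/(4*t^2) * DD ee2 (DD ee2 (DD ee2 (FF Q))) (x,p,t) := by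
    have h0 : pdP (fun a b c => Lop Q a b c) x p t = deriv (fun z => Lop Q x z t) p := rfl
    have hfun : (fun z : ℝ => Lop Q x z t)
        = fun z => DD ee3 (FF Q) (x,z,t) - (1/4) * DD ee1 (DD ee1 (FF Q)) (x,z,t)
          + 1/(4*t^2) * DD ee2 (DD ee2 (FF Q)) (x,z,t) :=
      funext fun z => Lop_eq hQ ht
    rw [h0, hfun]
    have comb := (((sP (DD ee3 (FF Q)) hG3 p).sub
      ((sP (DD ee1 (DD ee1 (FF Q))) hG11 p).const_mul (1/4))).add
      ((sP (DD ee2 (DD ee2 (FF Q))) hG22 p).const_mul (1/(4*t^2))))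
    exact comb.deriv
  -- symmetry of mixed partials
  have hs13 := DD_comm ee3 ee1 hG hv
  have hs23 := DD_comm ee3 ee2 hG hv
  have hs12 := DD_comm ee1 ee2 hG hv
  have hev12 : DD ee1 (DD ee2 (FF Q)) =ᶠ[nhds ((x,p,t) : ℝ×ℝ×ℝ)] DD ee2 (DD ee1 (FF Q)) := by
    filter_upwards [isOpen_Upos.mem_nhds hv] with w hw
    exact DD_comm ee1 ee2 hG hw
  have ht112 : DD ee1 (DD ee1 (DD ee2 (FF Q))) (x,p,t)
      = DD ee2 (DD ee1 (DD ee1 (FF Q))) (x,p,t) :=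
    (DD_congr ee1 hev12).trans (DD_comm ee1 ee2 hG1 hv)
  have ht221 : DD ee2 (DD ee2 (DD ee1 (FF Q))) (x,p,t)
      = DD ee1 (DD ee2 (DD ee2 (FF Q))) (x,p,t) :=
    (DD_congr ee2 hev12.symm).trans (DD_comm ee2 ee1 hG2 hv)
  -- assemble
  have eL : Lop (A4op Q) x p t = pdT (A4op Q) x p t - (1/4) * pdXX (A4op Q) x p t
      + 1/(4*t^2) * pdPP (A4op Q) x p t := rfl
  have eR : A4op (fun a b c => Lop Q a b c) x p t
      = p*t * pdX (fun a b c => Lop Q a b c) x p t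
        + (x/t) * pdP (fun a b c => Lop Q a b c) x p t
        + 2*x*p * Lop Q x p t := rfl
  rw [eL, eR, hA4t, hA4xx, hA4pp, hLx, hLp, Lop_eq hQ ht, ht112, ht221, hs13, hs23, hs12]
  field_simp
  ring
end

section
/- Let L = ∂_t - (1/4)∂_xx + (1/(4t²))∂_pp and define dₙ := -t^{n+1}·L for n ∈ ℤ (as operators on smooth functions of (x,p,t), t > 0). Then [d_m, d_n] = (m-n)·d_{m+n} for all m, n ∈ ℤ, i.e. the dₙ realize the Virasoro commutation relations with zero central charge. -/
/-- `dₙ := -t^{n+1}·L` for `n : ℤ`. -/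
noncomputable def dOp (n : ℤ) (Q : ℝ → ℝ → ℝ → ℝ) : ℝ → ℝ → ℝ → ℝ :=
  fun x p t => -(t ^ (n + 1)) * Lop Q x p t

-- auxiliary

def U3 : Set (ℝ × ℝ × ℝ) := {v | 0 < v.2.2}

lemma isOpen_U3 : IsOpen U3 :=
  isOpen_lt continuous_const (continuous_snd.comp continuous_snd)

lemma smooth_dirDeriv {g : ℝ × ℝ × ℝ → ℝ} (hg : ContDiffOn ℝ (⊤ : ℕ∞) g U3) (v : ℝ × ℝ × ℝ) :
    ContDiffOn ℝ (⊤ : ℕ∞) (fun y => fderiv ℝ g y v) U3 :=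
  (hg.fderiv_of_isOpen isOpen_U3 (by simp)).clm_apply contDiffOn_const

lemma diffAt_of_smooth {g : ℝ × ℝ × ℝ → ℝ} (hg : ContDiffOn ℝ (⊤ : ℕ∞) g U3)
    {y : ℝ × ℝ × ℝ} (hy : y ∈ U3) : DifferentiableAt ℝ g y :=
  ((hg y hy).contDiffAt (isOpen_U3.mem_nhds hy)).differentiableAt (by simp)

lemma line1_hasDerivAt (x p t : ℝ) :
    HasDerivAt (fun z : ℝ => ((z, p, t) : ℝ × ℝ × ℝ)) ((1, 0, 0) : ℝ × ℝ × ℝ) x :=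
  (hasDerivAt_id x).prodMk ((hasDerivAt_const x p).prodMk (hasDerivAt_const x t))

lemma line2_hasDerivAt (x p t : ℝ) :
    HasDerivAt (fun z : ℝ => ((x, z, t) : ℝ × ℝ × ℝ)) ((0, 1, 0) : ℝ × ℝ × ℝ) p :=
  (hasDerivAt_const p x).prodMk ((hasDerivAt_id p).prodMk (hasDerivAt_const p t))

lemma line3_hasDerivAt (x p t : ℝ) :
    HasDerivAt (fun s : ℝ => ((x, p, s) : ℝ × ℝ × ℝ)) ((0, 0, 1) : ℝ × ℝ × ℝ) t :=
  (hasDerivAt_const t x).prodMk ((hasDerivAt_const t p).prodMk (hasDerivAt_id t))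

lemma deriv_line1 {g : ℝ × ℝ × ℝ → ℝ} (x p t : ℝ) (hg : DifferentiableAt ℝ g (x, p, t)) :
    deriv (fun z => g (z, p, t)) x = fderiv ℝ g (x, p, t) (1, 0, 0) :=
  (hg.hasFDerivAt.comp_hasDerivAt x (line1_hasDerivAt x p t)).deriv

lemma deriv_line2 {g : ℝ × ℝ × ℝ → ℝ} (x p t : ℝ) (hg : DifferentiableAt ℝ g (x, p, t)) :
    deriv (fun z => g (x, z, t)) p = fderiv ℝ g (x, p, t) (0, 1, 0) :=
  (hg.hasFDerivAt.comp_hasDerivAt p (line2_hasDerivAt x p t)).deriv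

lemma deriv_line3 {g : ℝ × ℝ × ℝ → ℝ} (x p t : ℝ) (hg : DifferentiableAt ℝ g (x, p, t)) :
    deriv (fun s => g (x, p, s)) t = fderiv ℝ g (x, p, t) (0, 0, 1) :=
  (hg.hasFDerivAt.comp_hasDerivAt t (line3_hasDerivAt x p t)).deriv

lemma pdXX_dOp (k : ℤ) (F : ℝ → ℝ → ℝ → ℝ) (x p t : ℝ) :
    pdXX (dOp k F) x p t = -(t ^ (k + 1)) * pdXX (Lop F) x p t := by
  unfold pdXX dOp
  have h1 : (fun y => deriv (fun z => -(t ^ (k + 1)) * Lop F z p t) y)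
      = fun y => -(t ^ (k + 1)) * deriv (fun z => Lop F z p t) y := by
    funext y; exact deriv_const_mul_field _
  rw [h1, deriv_const_mul_field]

lemma pdPP_dOp (k : ℤ) (F : ℝ → ℝ → ℝ → ℝ) (x p t : ℝ) :
    pdPP (dOp k F) x p t = -(t ^ (k + 1)) * pdPP (Lop F) x p t := by
  unfold pdPP dOp
  have h1 : (fun y => deriv (fun z => -(t ^ (k + 1)) * Lop F x z t) y)
      = fun y => -(t ^ (k + 1)) * deriv (fun z => Lop F x z t) y := by
    funext y; exact deriv_const_mul_field _
  rw [h1, deriv_const_mul_field]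

/-- The operators `dₙ = -t^{n+1}L` satisfy the Virasoro relations with zero central
charge: `[d_m, d_n] = (m-n)·d_{m+n}`. -/
theorem stmt19 (m n : ℤ) (Q : ℝ → ℝ → ℝ → ℝ) (hQ : SmoothPos Q) :
    ∀ x p t : ℝ, 0 < t →
      dOp m (dOp n Q) x p t - dOp n (dOp m Q) x p t
        = ((m : ℝ) - (n : ℝ)) * dOp (m + n) Q x p t := by
  intro x p t ht
  set f : ℝ × ℝ × ℝ → ℝ := fun v => Q v.1 v.2.1 v.2.2 with hf
  have hQ' : ContDiffOn ℝ (⊤ : ℕ∞) f U3 := hQ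
  set L1 : ℝ × ℝ × ℝ → ℝ := fun y => fderiv ℝ f y (1, 0, 0) with hL1
  set L2 : ℝ × ℝ × ℝ → ℝ := fun y => fderiv ℝ f y (0, 1, 0) with hL2
  set L3 : ℝ × ℝ × ℝ → ℝ := fun y => fderiv ℝ f y (0, 0, 1) with hL3
  have hL1s : ContDiffOn ℝ (⊤ : ℕ∞) L1 U3 := smooth_dirDeriv hQ' _
  have hL2s : ContDiffOn ℝ (⊤ : ℕ∞) L2 U3 := smooth_dirDeriv hQ' _
  have hL3s : ContDiffOn ℝ (⊤ : ℕ∞) L3 U3 := smooth_dirDeriv hQ' _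
  set XX : ℝ × ℝ × ℝ → ℝ := fun y => fderiv ℝ L1 y (1, 0, 0) with hXX
  set PP : ℝ × ℝ × ℝ → ℝ := fun y => fderiv ℝ L2 y (0, 1, 0) with hPP
  have hXXs : ContDiffOn ℝ (⊤ : ℕ∞) XX U3 := smooth_dirDeriv hL1s _
  have hPPs : ContDiffOn ℝ (⊤ : ℕ∞) PP U3 := smooth_dirDeriv hL2s _
  -- identification of partial derivatives on U3
  have hmem : ∀ {x' p' s : ℝ}, 0 < s → ((x', p', s) : ℝ × ℝ × ℝ) ∈ U3 := fun hs => hs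
  have hpdT : ∀ x' p' s : ℝ, 0 < s → pdT Q x' p' s = L3 (x', p', s) := by
    intro x' p' s hs
    exact deriv_line3 x' p' s (diffAt_of_smooth hQ' (hmem hs))
  have hpdXX : ∀ x' p' s : ℝ, 0 < s → pdXX Q x' p' s = XX (x', p', s) := by
    intro x' p' s hs
    unfold pdXX
    have h1 : (fun y => deriv (fun z => Q z p' s) y) = fun y => L1 (y, p', s) := by
      funext y
      exact deriv_line1 y p' s (diffAt_of_smooth hQ' (hmem hs))
    rw [h1]
    exact deriv_line1 x' p' s (diffAt_of_smooth hL1s (hmem hs))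
  have hpdPP : ∀ x' p' s : ℝ, 0 < s → pdPP Q x' p' s = PP (x', p', s) := by
    intro x' p' s hs
    unfold pdPP
    have h1 : (fun y => deriv (fun z => Q x' z s) y) = fun y => L2 (x', y, s) := by
      funext y
      exact deriv_line2 x' y s (diffAt_of_smooth hQ' (hmem hs))
    rw [h1]
    exact deriv_line2 x' p' s (diffAt_of_smooth hL2s (hmem hs))
  have hLop : ∀ s : ℝ, 0 < s →
      Lop Q x p s = L3 (x, p, s) - (1/4) * XX (x, p, s) + 1/(4*s^2) * PP (x, p, s) := by
    intro s hs
    unfold Lop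
    rw [hpdT x p s hs, hpdXX x p s hs, hpdPP x p s hs]
  -- differentiability of G := s ↦ Lop Q x p s at t
  set G : ℝ → ℝ := fun s => Lop Q x p s with hG
  have hGdiff : DifferentiableAt ℝ G t := by
    have hline : ∀ {g : ℝ × ℝ × ℝ → ℝ}, ContDiffOn ℝ (⊤ : ℕ∞) g U3 →
        DifferentiableAt ℝ (fun s : ℝ => g (x, p, s)) t := by
      intro g hg
      exact (diffAt_of_smooth hg (hmem ht)).comp t (line3_hasDerivAt x p t).differentiableAt
    have h1 : DifferentiableAt ℝ
        (fun s => L3 (x, p, s) - (1/4) * XX (x, p, s) + 1/(4*s^2) * PP (x, p, s)) t := by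
      apply DifferentiableAt.add
      · exact (hline hL3s).sub ((hline hXXs).const_mul _)
      · apply DifferentiableAt.mul _ (hline hPPs)
        apply DifferentiableAt.div (differentiableAt_const _)
        · exact (differentiableAt_const _).mul (differentiableAt_pow 2)
        · positivity
    apply h1.congr_of_eventuallyEq
    filter_upwards [eventually_gt_nhds ht] with s hs
    exact hLop s hs
  -- derivative of s ↦ -(s^(k+1)) * G s
  have key : ∀ k : ℤ, deriv (fun s => -(s ^ (k + 1)) * G s) t
      = -((k : ℝ) + 1) * t ^ k * G t + -(t ^ (k + 1)) * deriv G t := by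
    intro k
    have h1 : HasDerivAt (fun s : ℝ => -(s ^ (k + 1)))
        (-(((k : ℝ) + 1) * t ^ (k + 1 - 1))) t := by
      have := (hasDerivAt_zpow (k + 1) t (Or.inl ht.ne')).neg
      simpa [Pi.neg_def] using this
    have h2 : HasDerivAt (fun s => -(s ^ (k + 1)) * G s) _ t := h1.mul hGdiff.hasDerivAt
    rw [h2.deriv]
    have : (k : ℤ) + 1 - 1 = k := by ring
    rw [this]
    ring
  -- pdT of dOp
  have hpdT_dOp : ∀ k : ℤ, pdT (dOp k Q) x p t
      = -((k : ℝ) + 1) * t ^ k * G t + -(t ^ (k + 1)) * deriv G t := by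
    intro k
    have : pdT (dOp k Q) x p t = deriv (fun s => -(s ^ (k + 1)) * G s) t := rfl
    rw [this, key k]
  -- assemble
  have hLop_dOp : ∀ k : ℤ, Lop (dOp k Q) x p t
      = (-((k : ℝ) + 1) * t ^ k * G t + -(t ^ (k + 1)) * deriv G t)
        - (1/4) * (-(t ^ (k + 1)) * pdXX (Lop Q) x p t)
        + 1/(4*t^2) * (-(t ^ (k + 1)) * pdPP (Lop Q) x p t) := by
    intro k
    unfold Lop
    rw [show pdT (dOp k Q) x p t = _ from hpdT_dOp k, pdXX_dOp, pdPP_dOp]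
    rfl
  have e1 : dOp m (dOp n Q) x p t = -(t ^ (m + 1)) * Lop (dOp n Q) x p t := rfl
  have e2 : dOp n (dOp m Q) x p t = -(t ^ (n + 1)) * Lop (dOp m Q) x p t := rfl
  have e3 : dOp (m + n) Q x p t = -(t ^ (m + n + 1)) * G t := rfl
  rw [e1, e2, e3, hLop_dOp m, hLop_dOp n]
  have ht0 : (t : ℝ) ≠ 0 := ht.ne'
  have zm : t ^ (m + 1) = t ^ m * t := by rw [zpow_add₀ ht0, zpow_one]
  have zn : t ^ (n + 1) = t ^ n * t := by rw [zpow_add₀ ht0, zpow_one]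
  have zmn : t ^ (m + n + 1) = t ^ m * t ^ n * t := by
    rw [zpow_add₀ ht0, zpow_add₀ ht0, zpow_one]
  rw [zm, zn, zmn]
  ring
end
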